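/- With θ := Σₐ ηₐ(ξ)θₐ, ξ⊥ := Σₐ ηₐ(ξ)ξₐ, η⊥ := Σₐ ηₐ(ξ)ηₐ, one has θ² - (φξ⊥)⊗(η⊥∘φ) = ‖ξ⊥‖² I, i.e. θ²X - η⊥(φX)·φξ⊥ = ‖ξ⊥‖² X for all X. -/

import Mathlib

open RealInnerProductSpace

/-- Pointwise setup on a real inner product space: an almost contact metric
structure `(φ, ξ, η)` together with an almost contact metric 3-structure
`(φₐ, ξₐ, ηₐ)`, `a ∈ ZMod 3`, satisfying the quaternionic contact relations and
the compatibility relations coming from `JJₐ = JₐJ`.  Here `η x = ⟪x, ξ⟫` and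
`ηₐ x = ⟪x, ξₐ⟫`. -/
structure ContactSetup (V : Type*) [NormedAddCommGroup V] [InnerProductSpace ℝ V] where
  φ : V →ₗ[ℝ] V
  ξ : V
  φa : ZMod 3 → (V →ₗ[ℝ] V)
  ξa : ZMod 3 → V
  φ_sq : ∀ x, φ (φ x) = -x + ⟪x, ξ⟫ • ξ
  ξ_unit : ⟪ξ, ξ⟫ = 1
  φ_ξ : φ ξ = 0
  φ_metric : ∀ x y, ⟪φ x, φ y⟫ = ⟪x, y⟫ - ⟪x, ξ⟫ * ⟪y, ξ⟫
  φa_sq : ∀ a x, φa a (φa a x) = -x + ⟪x, ξa a⟫ • ξa a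
  ξa_unit : ∀ a, ⟪ξa a, ξa a⟫ = 1
  φa_ξa : ∀ a, φa a (ξa a) = 0
  φa_metric : ∀ a x y, ⟪φa a x, φa a y⟫ = ⟪x, y⟫ - ⟪x, ξa a⟫ * ⟪y, ξa a⟫
  quat₁ : ∀ a x, φa a (φa (a + 1) x) - ⟪x, ξa (a + 1)⟫ • ξa a = φa (a + 2) x
  quat₂ : ∀ a x, φa (a + 2) x = -(φa (a + 1) (φa a x)) + ⟪x, ξa a⟫ • ξa (a + 1)
  quat_ξ₁ : ∀ a, φa a (ξa (a + 1)) = ξa (a + 2)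
  quat_ξ₂ : ∀ a, ξa (a + 2) = -(φa (a + 1) (ξa a))
  inter : ∀ a x, φa a (φ x) - ⟪x, ξ⟫ • ξa a = φ (φa a x) - ⟪x, ξa a⟫ • ξ
  inter_ξ : ∀ a, φ (ξa a) = φa a ξ

/-- The local symmetric tensor `θₐ := φₐφ - ξₐ ⊗ η`. -/
def ContactSetup.θa {V : Type*} [NormedAddCommGroup V] [InnerProductSpace ℝ V]
    (S : ContactSetup V) (a : ZMod 3) (x : V) : V :=
  S.φa a (S.φ x) - ⟪x, S.ξ⟫ • S.ξa a

namespace ContactSetup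

variable {V : Type*} [NormedAddCommGroup V] [InnerProductSpace ℝ V] (S : ContactSetup V)

/-- `ξ⊥ := Σₐ ηₐ(ξ) ξₐ`. -/
def ξperp : V := ∑ a : ZMod 3, ⟪S.ξ, S.ξa a⟫ • S.ξa a

/-- `η⊥ := Σₐ ηₐ(ξ) ηₐ`. -/
def ηperp (x : V) : ℝ := ∑ a : ZMod 3, ⟪S.ξ, S.ξa a⟫ * ⟪x, S.ξa a⟫

/-- `θ := Σₐ ηₐ(ξ) θₐ`. -/
def θ (x : V) : V := ∑ a : ZMod 3, ⟪S.ξ, S.ξa a⟫ • S.θa a x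

/-- `φ⊥ := Σₐ ηₐ(ξ) φₐ`. -/
def φperp (x : V) : V := ∑ a : ZMod 3, ⟪S.ξ, S.ξa a⟫ • S.φa a x

/-- `‖ξ⊥‖² = Σₐ ηₐ(ξ)²`. -/
def nsq : ℝ := ∑ a : ZMod 3, ⟪S.ξ, S.ξa a⟫ ^ 2

end ContactSetup

/-! The compatibility relations give two factorisations
`θ = φ⊥φ - ξ⊥ ⊗ η = φφ⊥ - ξ ⊗ η⊥`, and the quaternionic relations (the `φₐ`
anticommute up to rank-one terms) give `φ⊥² = -‖ξ⊥‖² I + ξ⊥ ⊗ η⊥`. Composing the two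
factorisations, `φ² = -I + ξ ⊗ η` collapses `θ²` to `-φ⊥² + ξ⊥ ⊗ η⊥` plus the term
`(φ⊥ξ) ⊗ (η ∘ φ⊥)`, which equals `(φξ⊥) ⊗ (η⊥ ∘ φ)` because `φ` and the `φₐ` are skew
and `φξₐ = φₐξ`. -/

theorem ZMod.sum_univ_three {M : Type*} [AddCommMonoid M] (f : ZMod 3 → M) :
    ∑ a, f a = f 0 + f 1 + f 2 :=
  Fin.sum_univ_three f

section AlmostContact

variable {V : Type*} [NormedAddCommGroup V] [InnerProductSpace ℝ V] {f : V →ₗ[ℝ] V} {u : V}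

theorem inner_apply_eq_zero_of_sq_eq (hsq : ∀ x, f (f x) = -x + ⟪x, u⟫ • u)
    (hu : ⟪u, u⟫ = 1) (hfu : f u = 0) (x : V) : ⟪f x, u⟫ = 0 := by
  have hcube : ⟪f x, u⟫ • u = 0 := by
    have h : f (f (f x)) = -f x := by
      rw [hsq x, map_add, map_neg, map_smul, hfu, smul_zero, add_zero]
    linear_combination (norm := module) h - hsq (f x)
  simpa only [real_inner_smul_left, hu, inner_zero_left, mul_one] using congrArg (⟪·, u⟫) hcube

theorem inner_apply_left_eq_neg_of_sq_eq (hsq : ∀ x, f (f x) = -x + ⟪x, u⟫ • u)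
    (hu : ⟪u, u⟫ = 1) (hfu : f u = 0)
    (hmetric : ∀ x y, ⟪f x, f y⟫ = ⟪x, y⟫ - ⟪x, u⟫ * ⟪y, u⟫) (x y : V) :
    ⟪f x, y⟫ = -⟪x, f y⟫ := by
  have h := hmetric x (f y)
  rw [hsq, inner_apply_eq_zero_of_sq_eq hsq hu hfu, inner_add_right, inner_neg_right,
    real_inner_smul_right, inner_apply_eq_zero_of_sq_eq hsq hu hfu] at h
  linarith

end AlmostContact

namespace ContactSetup

variable {V : Type*} [NormedAddCommGroup V] [InnerProductSpace ℝ V] (S : ContactSetup V)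

theorem inner_φ_ξ (x : V) : ⟪S.φ x, S.ξ⟫ = 0 :=
  inner_apply_eq_zero_of_sq_eq S.φ_sq S.ξ_unit S.φ_ξ x

theorem inner_φ_left (x y : V) : ⟪S.φ x, y⟫ = -⟪x, S.φ y⟫ :=
  inner_apply_left_eq_neg_of_sq_eq S.φ_sq S.ξ_unit S.φ_ξ S.φ_metric x y

theorem inner_φa_left (a : ZMod 3) (x y : V) : ⟪S.φa a x, y⟫ = -⟪x, S.φa a y⟫ :=
  inner_apply_left_eq_neg_of_sq_eq (S.φa_sq a) (S.ξa_unit a) (S.φa_ξa a) (S.φa_metric a) x y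

theorem φa_anticomm (a : ZMod 3) (x : V) :
    S.φa a (S.φa (a + 1) x) + S.φa (a + 1) (S.φa a x) =
      ⟪x, S.ξa (a + 1)⟫ • S.ξa a + ⟪x, S.ξa a⟫ • S.ξa (a + 1) := by
  linear_combination (norm := module) S.quat₁ a x + S.quat₂ a x

theorem φperp_add (x y : V) : S.φperp (x + y) = S.φperp x + S.φperp y := by
  simp only [φperp, map_add, smul_add, Finset.sum_add_distrib]

theorem φperp_smul (r : ℝ) (x : V) : S.φperp (r • x) = r • S.φperp x := by
  simp only [φperp, map_smul, Finset.smul_sum, smul_comm r]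

theorem φperp_neg (x : V) : S.φperp (-x) = -S.φperp x := by
  simpa using S.φperp_smul (-1) x

theorem φperp_ξ : S.φperp S.ξ = S.φ S.ξperp := by
  simp only [φperp, ξperp, map_sum, map_smul, S.inter_ξ]

theorem inner_φperp_ξ (x : V) : ⟪S.φperp x, S.ξ⟫ = S.ηperp (S.φ x) := by
  simp only [φperp, ηperp, sum_inner, real_inner_smul_left, S.inner_φa_left, ← S.inter_ξ,
    S.inner_φ_left (x := x)]

theorem θ_eq_φperp_comp (x : V) : S.θ x = S.φperp (S.φ x) - ⟪x, S.ξ⟫ • S.ξperp := by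
  simp only [θ, θa, φperp, ξperp, smul_sub, Finset.sum_sub_distrib,
    Finset.smul_sum, smul_comm ⟪x, S.ξ⟫]

theorem θ_eq_comp_φperp (x : V) : S.θ x = S.φ (S.φperp x) - S.ηperp x • S.ξ := by
  simp only [θ, θa, S.inter, φperp, ηperp, smul_sub, Finset.sum_sub_distrib, map_sum, map_smul,
    Finset.sum_smul, smul_smul]

theorem φperp_sq (x : V) : S.φperp (S.φperp x) = -S.nsq • x + S.ηperp x • S.ξperp := by
  have h01 : S.φa 0 (S.φa 1 x) + S.φa 1 (S.φa 0 x) =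
      ⟪x, S.ξa 1⟫ • S.ξa 0 + ⟪x, S.ξa 0⟫ • S.ξa 1 := S.φa_anticomm 0 x
  have h12 : S.φa 1 (S.φa 2 x) + S.φa 2 (S.φa 1 x) =
      ⟪x, S.ξa 2⟫ • S.ξa 1 + ⟪x, S.ξa 1⟫ • S.ξa 2 := S.φa_anticomm 1 x
  have h20 : S.φa 2 (S.φa 0 x) + S.φa 0 (S.φa 2 x) =
      ⟪x, S.ξa 0⟫ • S.ξa 2 + ⟪x, S.ξa 2⟫ • S.ξa 0 := S.φa_anticomm 2 x
  simp only [φperp, nsq, ηperp, ξperp, ZMod.sum_univ_three, map_add, map_smul]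
  set c := fun a => ⟪S.ξ, S.ξa a⟫
  linear_combination (norm := module)
    (c 0 * c 1) • h01 + (c 1 * c 2) • h12 + (c 2 * c 0) • h20 +
      c 0 ^ 2 • S.φa_sq 0 x + c 1 ^ 2 • S.φa_sq 1 x + c 2 ^ 2 • S.φa_sq 2 x

end ContactSetup

theorem theta_global_sq_general {V : Type*} [NormedAddCommGroup V] [InnerProductSpace ℝ V]
    (S : ContactSetup V) (x : V) :
    S.θ (S.θ x) - S.ηperp (S.φ x) • S.φ S.ξperp = S.nsq • x := by
  have hφθ : S.φ (S.θ x) = -S.φperp x + ⟪S.φperp x, S.ξ⟫ • S.ξ := by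
    rw [S.θ_eq_comp_φperp, map_sub, map_smul, S.φ_sq, S.φ_ξ, smul_zero, sub_zero]
  have hηθ : ⟪S.θ x, S.ξ⟫ = -S.ηperp x := by
    rw [S.θ_eq_comp_φperp, inner_sub_left, real_inner_smul_left, S.inner_φ_ξ, S.ξ_unit]
    ring
  rw [S.θ_eq_φperp_comp (S.θ x), hφθ, hηθ, S.φperp_add, S.φperp_neg, S.φperp_smul, S.φperp_sq,
    S.inner_φperp_ξ, S.φperp_ξ]
  module

/-- `θ² - (φξ⊥) ⊗ (η⊥ ∘ φ) = ‖ξ⊥‖² I`: for all `X`,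
`θ(θ X) - η⊥(φ X) • φ ξ⊥ = ‖ξ⊥‖² • X`. -/
theorem theta_global_sq {V : Type*} [NormedAddCommGroup V] [InnerProductSpace ℝ V]
    (S : ContactSetup V)
    (horth : ∀ a b : ZMod 3, a ≠ b → ⟪S.ξa a, S.ξa b⟫ = 0) (x : V) :
    S.θ (S.θ x) - S.ηperp (S.φ x) • S.φ S.ξperp = S.nsq • x :=
  theta_global_sq_general S x
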